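/- Diameter of the exterior component near a boundary point: let Ω ⊂ ℝ^N be a bounded domain with connected boundary ∂Ω, let x ∈ ∂Ω, let δ > 0, and let K be the connected component of cl(Ω^c) ∩ cl(B_δ(x)) containing x. Then diam(K) ≥ δ. -/

import Mathlib

open MeasureTheory Metric Set

/-!
The closed exterior `F = closure Ωᶜ` is connected: a component of `F` missing `frontier F` would
be clopen in the connected space, so every component meets `frontier F ⊆ ∂Ω ⊆ F`, and the
connected set `∂Ω` glues them together. As `Ω` is bounded, `F` leaves `B_δ(x)`. Boundary bumping
in the compact set `F ∩ cl B_δ(x)` then shows that the component `K` of `x` reaches the sphere: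
otherwise a clopen piece of `F ∩ cl B_δ(x)` around `K` that avoids the sphere would be open and
closed in `F`, disconnecting it. A point of `K` on the sphere gives `diam K ≥ δ`.
-/

section Topology

variable {X : Type*} [TopologicalSpace X]

theorem nontrivial_of_mem_frontier {s : Set X} {x : X} (hx : x ∈ frontier s) : Nontrivial X := by
  obtain ⟨a, ha⟩ := closure_nonempty_iff.mp ⟨x, frontier_subset_closure hx⟩
  obtain ⟨b, hb⟩ :=
    closure_nonempty_iff.mp ⟨x, frontier_subset_closure (frontier_compl s ▸ hx)⟩
  exact ⟨a, b, fun hab => hb (hab ▸ ha)⟩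

theorem exists_isClopen_mem_disjoint_of_disjoint_connectedComponent [T2Space X] [CompactSpace X]
    {x : X} {S : Set X} (hS : IsClosed S) (h : Disjoint (connectedComponent x) S) :
    ∃ Z, IsClopen Z ∧ x ∈ Z ∧ Disjoint Z S := by
  rw [connectedComponent_eq_iInter_isClopen, disjoint_iff_inter_eq_empty, inter_comm] at h
  obtain ⟨u, hu⟩ := hS.isCompact.elim_finite_subfamily_closed _ (fun s => s.2.1.1) h
  refine ⟨⋂ s ∈ u, s.1, isClopen_biInter_finset fun s _ => s.2.1,
    mem_iInter₂.2 fun s _ => s.2.2, ?_⟩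
  rwa [disjoint_iff_inter_eq_empty, inter_comm]

theorem connectedComponentIn_inter_closure_inter_frontier_nonempty [T2Space X]
    {F V : Set X} {x : X} (hF : IsPreconnected F) (hV : IsOpen V) (hM : IsCompact (F ∩ closure V))
    (hx : x ∈ F ∩ closure V) (hFV : ¬F ⊆ V) :
    (connectedComponentIn (F ∩ closure V) x ∩ frontier V).Nonempty := by
  set M := F ∩ closure V
  have := isCompact_iff_compactSpace.mp hM
  rw [← not_disjoint_iff_nonempty_inter, connectedComponentIn_eq_image hx]
  intro hdisj
  obtain ⟨Z, hZ, hxZ, hZS⟩ := exists_isClopen_mem_disjoint_of_disjoint_connectedComponent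
    (isClosed_frontier.preimage continuous_subtype_val) (disjoint_image_left.mp hdisj)
  obtain ⟨W, hW, hWZ⟩ := isOpen_induced_iff.mp hZ.isOpen
  have hZV : Subtype.val '' Z ⊆ V := by
    rintro _ ⟨m, hm, rfl⟩
    rw [← hV.interior_eq, ← closure_sdiff_frontier]
    exact ⟨m.2.2, hZS.notMem_of_mem_left hm⟩
  -- `Z` is compact, hence closed in `X`, and open in `F` since it equals `F ∩ V ∩ W`.
  have hZclosed : IsClosed (Subtype.val '' Z) :=
    (hZ.isClosed.isCompact.image continuous_subtype_val).isClosed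
  have hZW : Subtype.val '' Z ⊆ W := by
    rintro _ ⟨m, hm, rfl⟩
    exact (hWZ ▸ hm : m ∈ Subtype.val ⁻¹' W)
  have hcover : F ⊆ (V ∩ W) ∪ (Subtype.val '' Z)ᶜ := fun z _ =>
    (em (z ∈ Subtype.val '' Z)).imp (fun h => ⟨hZV h, hZW h⟩) id
  obtain ⟨y, hyF, hyV⟩ := not_subset.mp hFV
  obtain ⟨z, hzF, hzVW, hzZ⟩ := hF _ _ (hV.inter hW) hZclosed.isOpen_compl hcover
    ⟨x, hx.1, hZV ⟨_, hxZ, rfl⟩, hZW ⟨_, hxZ, rfl⟩⟩ ⟨y, hyF, fun h => hyV (hZV h)⟩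
  exact hzZ ⟨⟨z, hzF, subset_closure hzVW.1⟩, hWZ ▸ hzVW.2, rfl⟩

variable [PreconnectedSpace X] [LocallyConnectedSpace X]

theorem IsClosed.connectedComponentIn_inter_frontier_nonempty {F : Set X} (hF : IsClosed F)
    (hFu : F ≠ univ) {y : X} (hy : y ∈ F) :
    (connectedComponentIn F y ∩ frontier F).Nonempty := by
  have hCclosed : IsClosed (connectedComponentIn F y) := by
    rw [connectedComponentIn_eq_image hy]
    exact hF.isClosedEmbedding_subtypeVal.isClosedMap _ isClosed_connectedComponent
  set C := connectedComponentIn F y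
  by_contra hC
  have hCint : C ⊆ interior F := fun z hz => by
    rw [← closure_sdiff_frontier, hF.closure_eq]
    exact ⟨connectedComponentIn_subset F y hz, fun hzf => hC ⟨z, hz, hzf⟩⟩
  have hCeq : C = connectedComponentIn (interior F) y :=
    (isPreconnected_connectedComponentIn.subset_connectedComponentIn
      (mem_connectedComponentIn hy) hCint).antisymm (connectedComponentIn_mono y interior_subset)
  have hCclopen : IsClopen C := ⟨hCclosed, hCeq ▸ isOpen_interior.connectedComponentIn⟩
  exact hFu (eq_univ_of_univ_subset
    ((hCclopen.eq_univ ⟨y, mem_connectedComponentIn hy⟩).symm.subset.trans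
      (connectedComponentIn_subset F y)))

theorem isPreconnected_closure_compl_of_isPreconnected_frontier {s : Set X}
    (hs : IsPreconnected (frontier s)) : IsPreconnected (closure sᶜ) := by
  set F := closure sᶜ
  by_cases hFu : F = univ
  · exact hFu ▸ isPreconnected_univ
  have hsF : frontier s ⊆ F := frontier_compl s ▸ frontier_subset_closure
  have hmeet (y : X) (hy : y ∈ F) : (connectedComponentIn F y ∩ frontier s).Nonempty := by
    obtain ⟨z, hzC, hz⟩ := isClosed_closure.connectedComponentIn_inter_frontier_nonempty hFu hy
    exact ⟨z, hzC, frontier_compl s ▸ frontier_closure_subset hz⟩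
  refine isPreconnected_of_forall_pair fun y hy y' hy' => ⟨connectedComponentIn F y,
    connectedComponentIn_subset F y, mem_connectedComponentIn hy, ?_,
    isPreconnected_connectedComponentIn⟩
  obtain ⟨z, hzC, hz⟩ := hmeet y hy
  obtain ⟨z', hzC', hz'⟩ := hmeet y' hy'
  have hz'C : z' ∈ connectedComponentIn F y := by
    rw [connectedComponentIn_eq hzC]
    exact hs.subset_connectedComponentIn hz hsF hz'
  rw [connectedComponentIn_eq hz'C, ← connectedComponentIn_eq hzC']
  exact mem_connectedComponentIn hy'

end Topology

theorem exterior_component_diameter_general (N : ℕ) (Ω : Set (EuclideanSpace ℝ (Fin N)))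
    (hΩb : Bornology.IsBounded Ω)
    (hbd : IsConnected (frontier Ω))
    (x : EuclideanSpace ℝ (Fin N)) (hx : x ∈ frontier Ω) (δ : ℝ) (hδ : 0 < δ) :
    δ ≤ Metric.diam (connectedComponentIn (closure Ωᶜ ∩ closure (Metric.ball x δ)) x) := by
  have := nontrivial_of_mem_frontier hx
  have hxM : x ∈ closure Ωᶜ ∩ closure (ball x δ) :=
    ⟨frontier_subset_closure (frontier_compl Ω ▸ hx), subset_closure (mem_ball_self hδ)⟩
  have hMc : IsCompact (closure Ωᶜ ∩ closure (ball x δ)) :=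
    isBounded_ball.isCompact_closure.inter_left isClosed_closure
  have hfar : ¬closure Ωᶜ ⊆ ball x δ := fun h => NormedSpace.unbounded_univ ℝ _ <|
    (hΩb.union isBounded_ball).subset fun y _ => (em (y ∈ Ω)).imp id (h <| subset_closure ·)
  obtain ⟨z, hzK, hz⟩ := connectedComponentIn_inter_closure_inter_frontier_nonempty
    (isPreconnected_closure_compl_of_isPreconnected_frontier hbd.isPreconnected)
    isOpen_ball hMc hxM hfar
  calc δ = dist z x := (frontier_ball_subset_sphere hz).symm
    _ ≤ diam (connectedComponentIn (closure Ωᶜ ∩ closure (ball x δ)) x) :=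
      dist_le_diam_of_mem (hMc.isBounded.subset (connectedComponentIn_subset _ _)) hzK
        (mem_connectedComponentIn hxM)

theorem exterior_component_diameter (N : ℕ) (Ω : Set (EuclideanSpace ℝ (Fin N)))
    (hΩo : IsOpen Ω) (hΩc : IsConnected Ω) (hΩb : Bornology.IsBounded Ω)
    (hbd : IsConnected (frontier Ω))
    (x : EuclideanSpace ℝ (Fin N)) (hx : x ∈ frontier Ω) (δ : ℝ) (hδ : 0 < δ) :
    δ ≤ Metric.diam (connectedComponentIn (closure Ωᶜ ∩ closure (Metric.ball x δ)) x) :=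
  exterior_component_diameter_general N Ω hΩb hbd x hx δ hδ
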